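/- arXiv:1612.03084 — 3 statements merged into one kernel-verified Lean document; each statement's English description precedes it below -/
import Mathlib

section
/- Fix n ≥ 1. Let b_n(R) denote the set of monic polynomials p ∈ ℤ[X] of degree n all of whose complex roots have absolute value at most R. Then there is a constant C > 0 (depending only on n) such that |b_n(R)| ≤ C · R^{n(n+1)/2} for all sufficiently large R. -/
/-!
By Vieta, the coefficient of `X^i` in a monic polynomial of degree `n` is, up to sign, an
elementary symmetric function of its roots, so when all roots have absolute value at most `R ≥ 1`
it is bounded by `(n choose i) R^(n-i)`. A monic integer polynomial of degree `n` is determined by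
its coefficients of `X^0, …, X^(n-1)`, so there are at most `∏ i < n, (2 (n choose i) R^(n-i) + 1)`
of them, which is `O(R^(n + (n-1) + ⋯ + 1)) = O(R^(n(n+1)/2))`.
-/

open Polynomial

theorem Finset.sum_range_sub_eq (n : ℕ) : ∑ i ∈ Finset.range n, (n - i) = n * (n + 1) / 2 := by
  have h := Finset.sum_range_reflect (fun i => i) (n + 1)
  simp only [add_tsub_cancel_right] at h
  rw [Finset.sum_range_succ, Nat.sub_self, add_zero] at h
  rw [h, Finset.sum_range_id, add_tsub_cancel_right, mul_comm]

theorem Polynomial.abs_coeff_le_of_forall_norm_aroots_le {p : ℤ[X]} (hp : p.Monic) {R : ℝ}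
    (hR : ∀ z ∈ p.aroots ℂ, ‖z‖ ≤ R) (i : ℕ) :
    |(p.coeff i : ℝ)| ≤ R ^ (p.natDegree - i) * p.natDegree.choose i := by
  have h := coeff_le_of_roots_le (f := Int.castRingHom ℂ) i hp (IsAlgClosed.splits _) hR
  simpa [coeff_map] using h

theorem Polynomial.injOn_coeff_fin_monic_natDegree_eq (R : Type*) [Semiring R] (n : ℕ) :
    Set.InjOn (fun (p : R[X]) (i : Fin n) => p.coeff i) {p | p.Monic ∧ p.natDegree = n} := by
  rintro p ⟨hp, rfl⟩ q ⟨hq, hpq⟩ h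
  ext k
  rcases lt_trichotomy k p.natDegree with hk | rfl | hk
  · exact congrFun h ⟨k, hk⟩
  · rw [hp.coeff_natDegree, ← hpq, hq.coeff_natDegree]
  · rw [coeff_eq_zero_of_natDegree_lt hk, coeff_eq_zero_of_natDegree_lt (hpq ▸ hk)]

theorem Set.ncard_le_prod_of_injOn_abs_le {α ι : Type*} [Fintype ι] {S : Set α}
    {f : α → ι → ℤ} {B : ι → ℝ} (hB : ∀ i, 0 ≤ B i) (hf : S.InjOn f)
    (hfB : ∀ a ∈ S, ∀ i, |(f a i : ℝ)| ≤ B i) :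
    (S.ncard : ℝ) ≤ ∏ i, (2 * B i + 1) := by
  classical
  let box := Fintype.piFinset fun i => Finset.Icc (-⌊B i⌋) ⌊B i⌋
  have hmaps : Set.MapsTo f S box := by
    intro a ha
    simp only [box, Finset.mem_coe, Fintype.mem_piFinset, Finset.mem_Icc, ← abs_le]
    exact fun i => Int.le_floor.mpr (by exact_mod_cast hfB a ha i)
  have hcard : S.ncard ≤ box.card := by
    simpa using Set.ncard_le_ncard_of_injOn f hmaps hf box.finite_toSet
  calc (S.ncard : ℝ) ≤ box.card := by exact_mod_cast hcard
    _ = ∏ i, (2 * (⌊B i⌋ : ℝ) + 1) := by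
      simp only [box, Fintype.card_piFinset, Int.card_Icc, Nat.cast_prod]
      refine Finset.prod_congr rfl fun i _ => ?_
      have : 0 ≤ ⌊B i⌋ := Int.floor_nonneg.mpr (hB i)
      rw [← Int.cast_natCast, Int.toNat_of_nonneg (by omega)]
      push_cast
      ring
    _ ≤ ∏ i, (2 * B i + 1) := by
      refine Finset.prod_le_prod (fun i _ => ?_) fun i _ => by linarith [Int.floor_le (B i)]
      have : 0 ≤ ⌊B i⌋ := Int.floor_nonneg.mpr (hB i)
      positivity

theorem card_polys_with_bounded_roots_le_general (n : ℕ) :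
    ∃ C : ℝ, 0 < C ∧ ∀ᶠ R : ℝ in Filter.atTop,
      ({p : Polynomial ℤ | p.Monic ∧ p.natDegree = n ∧
          ∀ z ∈ p.aroots ℂ, ‖z‖ ≤ R}.ncard : ℝ) ≤
        C * R ^ (n * (n + 1) / 2) := by
  have hchoose (i : Fin n) : (1 : ℝ) ≤ n.choose i := by
    exact_mod_cast Nat.choose_pos i.is_lt.le
  refine ⟨∏ i : Fin n, (3 * n.choose i : ℝ),
    Finset.prod_pos fun i _ => by linarith [hchoose i], ?_⟩
  filter_upwards [Filter.eventually_ge_atTop (1 : ℝ)] with R hR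
  have hB (i : Fin n) : 1 ≤ n.choose i * R ^ (n - i) := one_le_mul_of_one_le_of_one_le
    (hchoose i) (one_le_pow₀ hR)
  calc _ ≤ ∏ i : Fin n, (2 * (n.choose i * R ^ (n - i)) + 1) := by
        refine Set.ncard_le_prod_of_injOn_abs_le (fun i => by linarith [hB i])
          ((injOn_coeff_fin_monic_natDegree_eq ℤ n).mono fun _ => And.imp_right And.left) ?_
        rintro p ⟨hp, rfl, hroots⟩ i
        rw [mul_comm]
        exact abs_coeff_le_of_forall_norm_aroots_le hp hroots i
    _ ≤ ∏ i : Fin n, (3 * n.choose i * R ^ (n - i)) := by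
        gcongr with i
        linarith [hB i]
    _ = _ := by
        rw [Finset.prod_mul_distrib, Finset.prod_pow_eq_pow_sum, Fin.sum_univ_eq_sum_range,
          Finset.sum_range_sub_eq]

/-- The number of monic integer polynomials of degree `n ≥ 1` all of whose
complex roots have absolute value at most `R` is at most `C · R^(n(n+1)/2)` for large `R`. -/
theorem card_polys_with_bounded_roots_le (n : ℕ) (hn : 1 ≤ n) :
    ∃ C : ℝ, 0 < C ∧ ∀ᶠ R : ℝ in Filter.atTop,
      ({p : Polynomial ℤ | p.Monic ∧ p.natDegree = n ∧
          ∀ z ∈ p.aroots ℂ, ‖z‖ ≤ R}.ncard : ℝ) ≤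
        C * R ^ (n * (n + 1) / 2) :=
  card_polys_with_bounded_roots_le_general n
end

section
/- Let n ≥ 2, let R > 0, and let p(x) = x^n + a_{n−1}x^{n−1} + ⋯ + a_1 x + a_0 be a polynomial with real coefficients satisfying the three inequalities: (1) 1 > Σ_{k=0}^{n−1} |a_k|/R^{n−k}; (2) (1/2)^{n−1}·|a_{n−1}|/R > Σ_{k=0}^{n−2} (1/2)^k·|a_k|/R^{n−k} + (1/2)^n; (3) (1/3)^{n−1}·|a_{n−1}|/R > Σ_{k=0}^{n−2} (1/3)^k·|a_k|/R^{n−k} + (1/3)^n. Then p has exactly one complex root λ (counted with multiplicity) with |λ| > R/3; this root satisfies R/2 < |λ| < R, it is a simple root, it is real, and every other complex root μ of p satisfies |μ| < R/3. -/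
/-!
Rouché's theorem for polynomials: if `‖g‖ < ‖d‖` on a circle, then `∮ (d + g)' / (d + g)` and
`∮ d' / d` differ by the integral of the derivative of `log ((d + g) / d)`, a holomorphic function
near the circle because `(d + g) / d` stays in the right half-plane there; so by the argument
principle `d + g` and `d` have equally many roots inside. Comparing `p` with `X ^ n` on `|z| = R`
and with `a_{n-1} X ^ (n-1)` on `|z| = R/2` and `|z| = R/3` shows that `p` has `n` roots in the
disc of radius `R`, of which `n - 1` already lie in the disc of radius `R/3`. The remaining root
has modulus strictly larger than all the others, so it equals its complex conjugate.
-/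

open Polynomial

section Rouche

open Complex Metric
open scoped Real

variable {c : ℂ} {r : ℝ}

theorem circleIntegral_sub_inv_eq_ite (hr : 0 < r) {μ : ℂ} (hμ : dist μ c ≠ r) :
    (∮ z in C(c, r), (z - μ)⁻¹) = if dist μ c < r then 2 * π * I else 0 := by
  split_ifs with hin
  · exact circleIntegral.integral_sub_inv_of_mem_ball hin
  · have hout : ∀ z ∈ closedBall c r, z - μ ≠ 0 := fun z hz hzμ => by
      rw [sub_eq_zero.mp hzμ, mem_closedBall] at hz
      exact hμ (le_antisymm hz (not_lt.mp hin))
    exact circleIntegral_eq_zero_of_differentiable_on_off_countable hr.le Set.countable_empty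
      ((continuousOn_id.sub continuousOn_const).inv₀ hout)
      fun z hz => (differentiableAt_id.sub_const μ).inv (hout z (ball_subset_closedBall hz.1))

theorem circleIntegral_multiset_sum_sub_inv (hr : 0 < r) (s : Multiset ℂ)
    (hs : ∀ μ ∈ s, dist μ c ≠ r) :
    (∮ z in C(c, r), (s.map fun μ => (z - μ)⁻¹).sum) =
      2 * π * I * (s.filter (dist · c < r)).card := by
  induction s using Multiset.induction_on with
  | empty => simp [circleIntegral]
  | cons μ s ih =>
    have hμ : dist μ c ≠ r := hs μ (Multiset.mem_cons_self μ s)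
    have hs' : ∀ ν ∈ s, dist ν c ≠ r := fun ν hν => hs ν (Multiset.mem_cons_of_mem hν)
    have hintμ : CircleIntegrable (fun z => (z - μ)⁻¹) c r :=
      circleIntegrable_sub_inv_iff.mpr <| Or.inr <| by rwa [abs_of_pos hr, mem_sphere]
    have hint : CircleIntegrable (fun z => (s.map fun ν => (z - ν)⁻¹).sum) c r :=
      (continuousOn_multiset_sum s fun ν hν => ContinuousOn.inv₀ (f := fun z => z - ν)
        (by fun_prop) fun z hz => sub_ne_zero.mpr fun hzν => hs' ν hν <| by
          rwa [hzν, mem_sphere] at hz).circleIntegrable hr.le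
    simp only [Multiset.map_cons, Multiset.sum_cons]
    rw [circleIntegral.integral_add hintμ hint, ih hs', circleIntegral_sub_inv_eq_ite hr hμ,
      Multiset.filter_cons]
    split_ifs <;> simp [mul_add, add_comm]

theorem Polynomial.circleIntegral_logDeriv_eq (hr : 0 < r) {p : ℂ[X]}
    (hp : ∀ z ∈ sphere c r, eval z p ≠ 0) :
    (∮ z in C(c, r), eval z (derivative p) / eval z p) =
      2 * π * I * (p.roots.filter (dist · c < r)).card := by
  rw [circleIntegral.integral_congr (g := fun z => (p.roots.map fun μ => (z - μ)⁻¹).sum) hr.le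
    fun z hz => by
      simpa only [one_div] using
        (IsAlgClosed.splits p).eval_derivative_div_eval_of_ne_zero (hp z hz)]
  exact circleIntegral_multiset_sum_sub_inv hr _ fun μ hμ hμr =>
    hp μ (mem_sphere.mpr hμr) (isRoot_of_mem_roots hμ)

theorem Polynomial.circleIntegrable_logDeriv (hr : 0 ≤ r) {p : ℂ[X]}
    (hp : ∀ z ∈ sphere c r, eval z p ≠ 0) :
    CircleIntegrable (fun z => eval z (derivative p) / eval z p) c r :=
  (p.derivative.continuous_aeval.continuousOn.div p.continuous_aeval.continuousOn
    hp).circleIntegrable hr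

theorem Polynomial.eval_add_ne_zero_of_norm_lt {R : Type*} [NormedRing R] {d g : R[X]} {z : R}
    (h : ‖eval z g‖ < ‖eval z d‖) : eval z (d + g) ≠ 0 := by
  intro h0
  rw [eval_add, add_eq_zero_iff_eq_neg] at h0
  rw [h0, norm_neg] at h
  exact lt_irrefl _ h

theorem Polynomial.circleIntegral_logDeriv_add_eq (hr : 0 ≤ r) {d g : ℂ[X]}
    (h : ∀ z ∈ sphere c r, ‖eval z g‖ < ‖eval z d‖) :
    (∮ z in C(c, r), eval z (derivative (d + g)) / eval z (d + g)) =
      ∮ z in C(c, r), eval z (derivative d) / eval z d := by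
  have hd : ∀ z ∈ sphere c r, eval z d ≠ 0 := fun z hz =>
    norm_pos_iff.mp ((norm_nonneg _).trans_lt (h z hz))
  have hdg : ∀ z ∈ sphere c r, eval z (d + g) ≠ 0 := fun z hz =>
    eval_add_ne_zero_of_norm_lt (h z hz)
  rw [← sub_eq_zero, ← circleIntegral.integral_sub (circleIntegrable_logDeriv hr hdg)
    (circleIntegrable_logDeriv hr hd)]
  refine circleIntegral.integral_eq_zero_of_hasDerivWithinAt
    (f := fun z => log (eval z (d + g) / eval z d)) hr fun z hz => ?_
  have hslit : eval z (d + g) / eval z d ∈ slitPlane := by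
    rw [eval_add, add_div, div_self (hd z hz)]
    refine mem_slitPlane_of_norm_lt_one ?_
    rw [norm_div, div_lt_one (norm_pos_iff.mpr (hd z hz))]
    exact h z hz
  have hlog := (((d + g).hasDerivAt z).div (d.hasDerivAt z) (hd z hz)).clog hslit
  have hquot : (eval z (derivative (d + g)) * eval z d - eval z (d + g) * eval z (derivative d)) /
      eval z d ^ 2 / (eval z (d + g) / eval z d) =
      eval z (derivative (d + g)) / eval z (d + g) - eval z (derivative d) / eval z d := by
    field_simp [hd z hz]
    rw [sub_div, mul_div_cancel_left₀ _ (hdg z hz)]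
  exact (hlog.congr_deriv hquot).hasDerivWithinAt

theorem Polynomial.card_roots_filter_dist_lt_add_eq (hr : 0 < r) {d g : ℂ[X]}
    (h : ∀ z ∈ sphere c r, ‖eval z g‖ < ‖eval z d‖) :
    ((d + g).roots.filter (dist · c < r)).card = (d.roots.filter (dist · c < r)).card := by
  have hlog := circleIntegral_logDeriv_add_eq hr.le h
  rw [circleIntegral_logDeriv_eq hr fun z hz => eval_add_ne_zero_of_norm_lt (h z hz),
    circleIntegral_logDeriv_eq hr fun z hz =>
      norm_pos_iff.mp ((norm_nonneg _).trans_lt (h z hz))] at hlog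
  exact_mod_cast mul_left_cancel₀ (by simp [Real.pi_ne_zero, I_ne_zero]) hlog

theorem Polynomial.card_roots_filter_norm_lt_C_mul_X_pow_add {a : ℂ} {m : ℕ} {g : ℂ[X]}
    (hr : 0 < r) (h : ∀ z : ℂ, ‖z‖ = r → ‖eval z g‖ < ‖a‖ * r ^ m) :
    ((C a * X ^ m + g).roots.filter (‖·‖ < r)).card = m := by
  have ha : a ≠ 0 := by
    rintro rfl
    simpa using (norm_nonneg _).trans_lt (h r (by simp [hr.le]))
  have hdom : ∀ z ∈ sphere (0 : ℂ) r, ‖eval z g‖ < ‖eval z (C a * X ^ m)‖ := fun z hz => by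
    rw [mem_sphere_zero_iff_norm] at hz
    simpa [hz] using h z hz
  have := card_roots_filter_dist_lt_add_eq hr hdom
  simp only [dist_zero_right] at this
  rw [this, roots_C_mul _ ha, roots_X_pow, Multiset.nsmul_singleton,
    Multiset.filter_eq_self.mpr fun μ hμ => by simp [Multiset.eq_of_mem_replicate hμ, hr],
    Multiset.card_replicate]

end Rouche

theorem Polynomial.norm_eval_sum_C_mul_X_pow_le {𝕜 : Type*} [NormedField 𝕜] (s : Finset ℕ)
    (b : ℕ → 𝕜) (z : 𝕜) :
    ‖eval z (∑ k ∈ s, C (b k) * X ^ k)‖ ≤ ∑ k ∈ s, ‖b k‖ * ‖z‖ ^ k := by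
  simp only [eval_finsetSum, eval_mul, eval_C, eval_pow, eval_X]
  exact (norm_sum_le _ _).trans_eq (by simp only [norm_mul, norm_pow])

theorem Polynomial.norm_eval_X_pow_add_sum_C_mul_X_pow_le {𝕜 : Type*} [NormedField 𝕜] (n : ℕ)
    (s : Finset ℕ) (b : ℕ → 𝕜) (z : 𝕜) :
    ‖eval z (X ^ n + ∑ k ∈ s, C (b k) * X ^ k)‖ ≤ ∑ k ∈ s, ‖b k‖ * ‖z‖ ^ k + ‖z‖ ^ n := by
  rw [eval_add, add_comm]
  refine (norm_add_le _ _).trans (add_le_add (norm_eval_sum_C_mul_X_pow_le s b z) ?_)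
  simp

theorem Polynomial.natDegree_X_pow_add_sum_C_mul_X_pow {R : Type*} [Semiring R] [Nontrivial R]
    (n : ℕ) (b : ℕ → R) : (X ^ n + ∑ k ∈ Finset.range n, C (b k) * X ^ k).natDegree = n := by
  rw [natDegree_add_eq_left_of_degree_lt, natDegree_X_pow]
  rw [degree_X_pow, Finset.sum_range fun k => C (b k) * X ^ k]
  exact degree_sum_fin_lt _

theorem Multiset.exists_eq_cons_of_card_filter_lt {α : Type*} {s : Multiset α} {f : α → ℝ}
    {m : ℕ} {r₁ r₂ r₃ : ℝ} (h₃₂ : r₃ ≤ r₂) (hs : card s = m + 1)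
    (h₁ : card (s.filter (f · < r₁)) = m + 1) (h₂ : card (s.filter (f · < r₂)) = m)
    (h₃ : card (s.filter (f · < r₃)) = m) :
    ∃ ρ t, s = ρ ::ₘ t ∧ r₂ ≤ f ρ ∧ f ρ < r₁ ∧ ∀ μ ∈ t, f μ < r₃ := by
  have hfilter₃₂ : s.filter (f · < r₃) = s.filter (f · < r₂) :=
    eq_of_le_of_card_le (monotone_filter_right _ fun μ hμ => hμ.trans_le h₃₂) (by rw [h₂, h₃])
  have hout : card (s.filter (¬ f · < r₂)) = 1 := by
    have := congrArg card (filter_add_not (f · < r₂) s)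
    rw [card_add, h₂, hs] at this
    omega
  obtain ⟨ρ, hρ⟩ := card_eq_one.mp hout
  have hρs : ρ ∈ s.filter (¬ f · < r₂) := hρ ▸ mem_singleton_self ρ
  have hall₁ : s.filter (f · < r₁) = s := eq_of_le_of_card_le (filter_le _ _) (by rw [hs, h₁])
  refine ⟨ρ, s.filter (f · < r₃), ?_, not_lt.mp (mem_filter.mp hρs).2, ?_,
    fun μ hμ => (mem_filter.mp hμ).2⟩
  · rw [hfilter₃₂, ← singleton_add, ← hρ, add_comm, filter_add_not]
  · exact (mem_filter.mp (hall₁.symm ▸ (mem_filter.mp hρs).1 : ρ ∈ s.filter (f · < r₁))).2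

theorem Polynomial.roots_eq_cons_of_dominant {m : ℕ} (b : ℕ → ℂ) {r₁ r₂ r₃ : ℝ} (hr₁ : 0 < r₁)
    (hr₃ : 0 < r₃) (hr₃₂ : r₃ ≤ r₂)
    (h₁ : ∑ k ∈ Finset.range (m + 1), ‖b k‖ * r₁ ^ k < r₁ ^ (m + 1))
    (h₂ : ∑ k ∈ Finset.range m, ‖b k‖ * r₂ ^ k + r₂ ^ (m + 1) < ‖b m‖ * r₂ ^ m)
    (h₃ : ∑ k ∈ Finset.range m, ‖b k‖ * r₃ ^ k + r₃ ^ (m + 1) < ‖b m‖ * r₃ ^ m) :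
    ∃ ρ t, (X ^ (m + 1) + ∑ k ∈ Finset.range (m + 1), C (b k) * X ^ k).roots = ρ ::ₘ t ∧
      r₂ < ‖ρ‖ ∧ ‖ρ‖ < r₁ ∧ ∀ μ ∈ t, ‖μ‖ < r₃ := by
  set P := X ^ (m + 1) + ∑ k ∈ Finset.range (m + 1), C (b k) * X ^ k with hPdef
  have hP : P = C (b m) * X ^ m + (X ^ (m + 1) + ∑ k ∈ Finset.range m, C (b k) * X ^ k) := by
    rw [hPdef, Finset.sum_range_succ]; ring
  have hdom : ∀ r, ∑ k ∈ Finset.range m, ‖b k‖ * r ^ k + r ^ (m + 1) < ‖b m‖ * r ^ m →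
      ∀ z : ℂ, ‖z‖ = r →
        ‖eval z (X ^ (m + 1) + ∑ k ∈ Finset.range m, C (b k) * X ^ k)‖ < ‖b m‖ * r ^ m :=
    fun r h z hz => hz ▸ (norm_eval_X_pow_add_sum_C_mul_X_pow_le _ _ b z).trans_lt (hz ▸ h)
  have hcount₁ : (P.roots.filter (‖·‖ < r₁)).card = m + 1 := by
    rw [hPdef, ← one_mul (X ^ (m + 1)), ← C_1]
    refine card_roots_filter_norm_lt_C_mul_X_pow_add hr₁ fun z hz => ?_
    simpa [hz] using (norm_eval_sum_C_mul_X_pow_le _ b z).trans_lt (hz ▸ h₁)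
  have hcount : ∀ r, 0 < r → ∑ k ∈ Finset.range m, ‖b k‖ * r ^ k + r ^ (m + 1) <
      ‖b m‖ * r ^ m → (P.roots.filter (‖·‖ < r)).card = m := fun r hr h =>
    hP ▸ card_roots_filter_norm_lt_C_mul_X_pow_add hr (hdom r h)
  have hcard : P.roots.card = m + 1 := by
    rw [IsAlgClosed.card_roots_eq_natDegree, natDegree_X_pow_add_sum_C_mul_X_pow]
  obtain ⟨ρ, t, hPρ, hρ₂, hρ₁, ht⟩ := Multiset.exists_eq_cons_of_card_filter_lt (f := (‖·‖))
    hr₃₂ hcard hcount₁ (hcount r₂ (hr₃.trans_le hr₃₂) h₂) (hcount r₃ hr₃ h₃)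
  have hρ : ρ ∈ P.roots := hPρ ▸ Multiset.mem_cons_self ρ t
  refine ⟨ρ, t, hPρ, hρ₂.lt_of_ne fun h => ?_, hρ₁, ht⟩
  exact eval_add_ne_zero_of_norm_lt (by simpa [← h] using hdom r₂ h₂ ρ h.symm)
    (hP ▸ isRoot_of_mem_roots hρ)

theorem Polynomial.conj_mem_roots_map_algebraMap {p : ℝ[X]} {z : ℂ}
    (hz : z ∈ (p.map (algebraMap ℝ ℂ)).roots) :
    starRingEnd ℂ z ∈ (p.map (algebraMap ℝ ℂ)).roots := by
  have hp : p ≠ 0 := fun h => by simp [h] at hz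
  rw [mem_roots_map hp, ← aeval_def] at hz ⊢
  rw [aeval_conj, hz, map_zero]

theorem Polynomial.conj_eq_self_of_roots_map_eq_cons {p : ℝ[X]} {ρ : ℂ} {t : Multiset ℂ}
    (hp : (p.map (algebraMap ℝ ℂ)).roots = ρ ::ₘ t) (ht : ∀ μ ∈ t, ‖μ‖ < ‖ρ‖) :
    starRingEnd ℂ ρ = ρ := by
  have hmem := conj_mem_roots_map_algebraMap (hp ▸ Multiset.mem_cons_self ρ t)
  rw [hp, Multiset.mem_cons] at hmem
  exact hmem.resolve_right fun h => (ht _ h).ne (Complex.norm_conj ρ)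

theorem div_pow_sub_mul_pow {K : Type*} [Field K] {R : K} (hR : R ≠ 0) {k n : ℕ} (hk : k ≤ n)
    (x : K) : x / R ^ (n - k) * R ^ n = x * R ^ k := by
  rw [← Nat.sub_add_cancel hk, pow_add, Nat.sub_add_cancel hk]
  field_simp

theorem sum_mul_pow_lt_of_sum_div_pow_lt {n : ℕ} {R : ℝ} (hR : 0 < R) (b : ℕ → ℝ)
    (h : 1 > ∑ k ∈ Finset.range n, b k / R ^ (n - k)) :
    ∑ k ∈ Finset.range n, b k * R ^ k < R ^ n := by
  have := mul_lt_mul_of_pos_right h (pow_pos hR n)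
  rwa [one_mul, Finset.sum_mul, Finset.sum_congr rfl fun k hk =>
    div_pow_sub_mul_pow hR.ne' (Finset.mem_range.mp hk).le _] at this

theorem sum_mul_div_pow_add_pow_lt_of_gt {m : ℕ} {R s : ℝ} (hR : 0 < R) (b : ℕ → ℝ)
    (h : (1 / s) ^ m * (b m / R) >
      ∑ k ∈ Finset.range m, (1 / s) ^ k * (b k / R ^ (m + 1 - k)) + (1 / s) ^ (m + 1)) :
    ∑ k ∈ Finset.range m, b k * (R / s) ^ k + (R / s) ^ (m + 1) < b m * (R / s) ^ m := by
  have hterm : ∀ k ≤ m + 1, (1 / s) ^ k * (b k / R ^ (m + 1 - k)) * R ^ (m + 1) =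
      b k * (R / s) ^ k := fun k hk => by
    rw [mul_assoc, div_pow_sub_mul_pow hR.ne' hk, div_eq_mul_one_div R s, mul_pow]
    ring
  have hlead : (1 / s) ^ m * (b m / R) * R ^ (m + 1) = b m * (R / s) ^ m := by
    rw [← hterm m m.le_succ, Nat.add_sub_cancel_left, pow_one]
  have := mul_lt_mul_of_pos_right h (pow_pos hR (m + 1))
  rwa [add_mul, Finset.sum_mul, Finset.sum_congr rfl fun k hk =>
      hterm k ((Finset.mem_range.mp hk).le.trans m.le_succ), ← mul_pow, one_div_mul_eq_div,
    hlead] at this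

/-- Rouché-type root localization: if the coefficients of a monic real
polynomial `x^n + a_{n-1}x^{n-1} + ⋯ + a_0` satisfy the three stated inequalities, then the
polynomial has exactly one complex root of absolute value `> R/3` (counted with multiplicity);
this root is real and simple, its absolute value lies strictly between `R/2` and `R`, and all
other complex roots have absolute value `< R/3`. -/
theorem dominant_real_root_of_coeff_ineqs (n : ℕ) (hn : 2 ≤ n) (R : ℝ) (hR : 0 < R)
    (a : ℕ → ℝ)
    (h1 : 1 > ∑ k ∈ Finset.range n, |a k| / R ^ (n - k))
    (h2 : (1 / 2 : ℝ) ^ (n - 1) * (|a (n - 1)| / R) >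
      (∑ k ∈ Finset.range (n - 1), (1 / 2 : ℝ) ^ k * (|a k| / R ^ (n - k))) +
        (1 / 2 : ℝ) ^ n)
    (h3 : (1 / 3 : ℝ) ^ (n - 1) * (|a (n - 1)| / R) >
      (∑ k ∈ Finset.range (n - 1), (1 / 3 : ℝ) ^ k * (|a k| / R ^ (n - k))) +
        (1 / 3 : ℝ) ^ n) :
    ∃ l : ℝ,
      (l : ℂ) ∈ ((X ^ n + ∑ k ∈ Finset.range n, C (a k) * X ^ k :
          Polynomial ℝ).map (algebraMap ℝ ℂ)).roots ∧
      R / 2 < |l| ∧ |l| < R ∧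
      ((X ^ n + ∑ k ∈ Finset.range n, C (a k) * X ^ k :
          Polynomial ℝ).map (algebraMap ℝ ℂ)).roots.count (l : ℂ) = 1 ∧
      (∀ μ ∈ ((X ^ n + ∑ k ∈ Finset.range n, C (a k) * X ^ k :
          Polynomial ℝ).map (algebraMap ℝ ℂ)).roots,
        μ ≠ (l : ℂ) → ‖μ‖ < R / 3) ∧
      (((X ^ n + ∑ k ∈ Finset.range n, C (a k) * X ^ k :
          Polynomial ℝ).map (algebraMap ℝ ℂ)).roots.filter
            (fun z => R / 3 < ‖z‖)).card = 1 := by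
  obtain ⟨m, rfl⟩ : ∃ m, n = m + 1 := ⟨n - 1, by omega⟩
  simp only [Nat.add_sub_cancel] at h2 h3
  have hnorm : ∀ k, |a k| = ‖(a k : ℂ)‖ := fun k => by simp
  have hP : ((X ^ (m + 1) + ∑ k ∈ Finset.range (m + 1), C (a k) * X ^ k : ℝ[X]).map
      (algebraMap ℝ ℂ)) = X ^ (m + 1) + ∑ k ∈ Finset.range (m + 1), C (a k : ℂ) * X ^ k := by
    simp [Polynomial.map_sum]
  obtain ⟨ρ, t, hroots, hρ₂, hρ₁, ht⟩ := roots_eq_cons_of_dominant (fun k => (a k : ℂ))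
    (r₂ := R / 2) (r₃ := R / 3) hR (by positivity) (by linarith)
    (by simpa only [hnorm] using sum_mul_pow_lt_of_sum_div_pow_lt hR _ h1)
    (by simpa only [hnorm] using sum_mul_div_pow_add_pow_lt_of_gt hR _ h2)
    (by simpa only [hnorm] using sum_mul_div_pow_add_pow_lt_of_gt hR _ h3)
  rw [← hP] at hroots
  have hρt : ρ ∉ t := fun h => by linarith [ht ρ h]
  obtain ⟨l, rfl⟩ := Complex.conj_eq_iff_real.mp <|
    conj_eq_self_of_roots_map_eq_cons hroots fun μ hμ => by linarith [ht μ hμ]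
  have hl : ‖(l : ℂ)‖ = |l| := by simp
  refine ⟨l, hroots ▸ Multiset.mem_cons_self _ t, hl ▸ hρ₂, hl ▸ hρ₁, ?_,
    fun μ hμ hne => ?_, ?_⟩
  · rw [hroots, Multiset.count_cons_self, Multiset.count_eq_zero.mpr hρt]
  · rw [hroots, Multiset.mem_cons] at hμ
    exact ht μ (hμ.resolve_left hne)
  · rw [hroots, Multiset.filter_cons, if_pos (by linarith),
      Multiset.filter_eq_nil.mpr fun μ hμ => not_lt.mpr (ht μ hμ).le]
    rfl
end

section
/- Fix n ≥ 2. Let P_n(R) denote the set of monic polynomials p ∈ ℤ[X] of degree n that have a real root λ with 1 < λ ≤ R such that every other complex root μ of p satisfies |μ| < λ. Then there exists a constant C > 0 such that for all sufficiently large R, (1/C) · R^{n(n+1)/2} ≤ |P_n(R)| ≤ C · R^{n(n+1)/2}. -/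
/-!
Upper bound: every root of a polynomial in `P_n(R)` has modulus at most `R`, so by Vieta the
coefficient of `X^k` is bounded by `C(n,k) R^(n-k)`; there are `O(R^(n(n+1)/2))` integer
coefficient vectors obeying these bounds.

Lower bound: let `p = X^n - m X^(n-1) + (lower terms)` with `m ≥ 2` and the coefficient of `X^k`
at most `(m/8n)^(n-k)` in absolute value. Comparing `z^(n-1) (z - m)` with the lower terms shows
that each root lies within `m/4n` of `0` or within `m/8n` of `m`. As the roots sum to `m`, exactly
one root (with multiplicity) lies near `m`; complex conjugation preserves that disc, so this root
is real, and it is a Perron root in `[m - m/8n, m + m/8n]`. Taking `m ∈ [R/3, R/2]` leaves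
`≫ R^(n(n+1)/2)` admissible coefficient vectors.
-/

open Polynomial

/-- The set of Perron polynomials of degree `n` with Perron root no larger than `R`:
monic integer polynomials of degree `n` with a real root `λ`, `1 < λ ≤ R`, such that every
other complex root (counted with multiplicity) has absolute value `< λ`. -/
noncomputable def perronPolys (n : ℕ) (R : ℝ) : Set (Polynomial ℤ) :=
  {p | p.Monic ∧ p.natDegree = n ∧ ∃ l : ℝ, 1 < l ∧ l ≤ R ∧
    Polynomial.aeval l p = 0 ∧
    ∀ μ ∈ (p.aroots ℂ).erase (l : ℂ), ‖μ‖ < l}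

open Finset

section MonicOfCoeffs

variable {R : Type*} [CommRing R] {n : ℕ}

noncomputable def monicOfCoeffs (n : ℕ) (c : Fin n → R) : R[X] :=
  X ^ n + ((degreeLTEquiv R n).symm c : R[X])

theorem degree_degreeLTEquiv_symm_lt (c : Fin n → R) :
    ((degreeLTEquiv R n).symm c : R[X]).degree < n :=
  mem_degreeLT.mp (Subtype.prop _)

theorem monicOfCoeffs_monic (c : Fin n → R) : (monicOfCoeffs n c).Monic :=
  monic_X_pow_add (degree_degreeLTEquiv_symm_lt c)

theorem monicOfCoeffs_natDegree [Nontrivial R] (c : Fin n → R) :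
    (monicOfCoeffs n c).natDegree = n := by
  have hlow : ((degreeLTEquiv R n).symm c : R[X]).degree < (X ^ n : R[X]).degree :=
    (degree_X_pow (R := R) n).symm ▸ degree_degreeLTEquiv_symm_lt c
  rw [monicOfCoeffs, natDegree_add_eq_left_of_degree_lt hlow, natDegree_X_pow]

theorem monicOfCoeffs_coeff (c : Fin n → R) (k : Fin n) :
    (monicOfCoeffs n c).coeff k = c k := by
  rw [monicOfCoeffs, coeff_add, coeff_X_pow, if_neg k.is_lt.ne, zero_add]
  exact congrFun ((degreeLTEquiv R n).apply_symm_apply c) k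

theorem monicOfCoeffs_injective : Function.Injective (monicOfCoeffs (R := R) n) :=
  fun c d h ↦ funext fun k ↦ by rw [← monicOfCoeffs_coeff c k, h, monicOfCoeffs_coeff]

theorem monicOfCoeffs_eq_of_monic [Nontrivial R] {p : R[X]} (hp : p.Monic)
    (hdeg : p.natDegree = n) :
    monicOfCoeffs n (fun k ↦ p.coeff k) = p := by
  ext j
  obtain hj | hj | hj := lt_trichotomy j n
  · exact monicOfCoeffs_coeff _ ⟨j, hj⟩
  · have hq := (monicOfCoeffs_monic fun k : Fin n ↦ p.coeff k).coeff_natDegree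
    rw [monicOfCoeffs_natDegree] at hq
    rw [hj, hq, ← hdeg, hp.coeff_natDegree]
  · have hq : (monicOfCoeffs n fun k ↦ p.coeff k).natDegree < j := by
      rwa [monicOfCoeffs_natDegree]
    rw [coeff_eq_zero_of_natDegree_lt hq, coeff_eq_zero_of_natDegree_lt (hdeg ▸ hj)]

end MonicOfCoeffs

theorem cast_card_Icc_ceil_floor (a b : ℝ) :
    (#(Icc ⌈a⌉ ⌊b⌋) : ℝ) = max ((⌊b⌋ + 1 - ⌈a⌉ : ℤ) : ℝ) 0 := by
  rw [Int.card_Icc, ← Int.cast_natCast, Int.toNat_eq_max]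
  push_cast
  rfl

theorem sub_sub_one_le_card_Icc_ceil_floor (a b : ℝ) :
    b - a - 1 ≤ (#(Icc ⌈a⌉ ⌊b⌋) : ℝ) := by
  rw [cast_card_Icc_ceil_floor]
  refine le_trans ?_ (le_max_left _ _)
  push_cast
  linarith [Int.lt_floor_add_one b, Int.ceil_lt_add_one a]

theorem card_Icc_ceil_floor_le {a b : ℝ} (h : a ≤ b) :
    (#(Icc ⌈a⌉ ⌊b⌋) : ℝ) ≤ b - a + 1 := by
  rw [cast_card_Icc_ceil_floor]
  refine max_le ?_ (by linarith)
  push_cast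
  linarith [Int.floor_le b, Int.le_ceil a]

section IntBox

variable {ι : Type*} [Fintype ι] [DecidableEq ι]

noncomputable def intBox (lo hi : ι → ℝ) : Finset (ι → ℤ) :=
  Icc (fun k ↦ ⌈lo k⌉) (fun k ↦ ⌊hi k⌋)

theorem mem_intBox {lo hi : ι → ℝ} {c : ι → ℤ} :
    c ∈ intBox lo hi ↔ ∀ k, lo k ≤ c k ∧ c k ≤ hi k := by
  simp [intBox, Pi.le_def, Int.ceil_le, Int.le_floor, forall_and]

theorem prod_sub_sub_one_le_card_intBox {lo hi : ι → ℝ} (h : ∀ k, lo k + 1 ≤ hi k) :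
    ∏ k, (hi k - lo k - 1) ≤ (#(intBox lo hi) : ℝ) := by
  rw [intBox, Pi.card_Icc, Nat.cast_prod]
  exact prod_le_prod (fun k _ ↦ by linarith [h k])
    fun k _ ↦ sub_sub_one_le_card_Icc_ceil_floor _ _

theorem card_intBox_le {lo hi : ι → ℝ} (h : ∀ k, lo k ≤ hi k) :
    (#(intBox lo hi) : ℝ) ≤ ∏ k, (hi k - lo k + 1) := by
  rw [intBox, Pi.card_Icc, Nat.cast_prod]
  exact prod_le_prod (fun k _ ↦ by positivity) fun k _ ↦ card_Icc_ceil_floor_le (h k)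

end IntBox

theorem prod_pow_sub_fin {M : Type*} [CommMonoid M] (x : M) (n : ℕ) :
    ∏ k : Fin n, x ^ (n - k) = x ^ (n * (n + 1) / 2) := by
  have hsum : ∑ k ∈ range n, (n - k) = ∑ k ∈ range (n + 1), k := by
    rw [← sum_range_reflect, sum_range_succ', add_zero]
    exact sum_congr rfl fun k hk ↦ by have := mem_range.mp hk; omega
  rw [prod_pow_eq_pow_sum, Fin.sum_univ_eq_sum_range (fun k ↦ n - k), hsum, sum_range_id,
    Nat.add_sub_cancel, mul_comm]

theorem norm_le_of_mem_perronPolys {n : ℕ} {R : ℝ} {p : ℤ[X]} (hp : p ∈ perronPolys n R)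
    {z : ℂ} (hz : z ∈ p.aroots ℂ) : ‖z‖ ≤ R := by
  obtain ⟨-, -, l, hl1, hlR, -, hsmall⟩ := hp
  by_cases hzl : z = l
  · rw [hzl, Complex.norm_real, Real.norm_of_nonneg (by linarith)]
    exact hlR
  · exact (hsmall z ((Multiset.mem_erase_of_ne hzl).mpr hz)).le.trans hlR

theorem abs_coeff_le_of_mem_perronPolys {n : ℕ} {R : ℝ} {p : ℤ[X]}
    (hp : p ∈ perronPolys n R) (k : ℕ) : |(p.coeff k : ℝ)| ≤ 2 ^ n * R ^ (n - k) := by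
  have h := coeff_le_of_roots_le k hp.1 (IsAlgClosed.splits (p.map (algebraMap ℤ ℂ)))
    fun z hz ↦ norm_le_of_mem_perronPolys hp hz
  rw [coeff_map, eq_intCast, Complex.norm_intCast, hp.2.1, mul_comm] at h
  obtain ⟨l, hl1, hlR, -⟩ := hp.2.2
  have hR0 : 0 ≤ R := by linarith
  exact h.trans
    (mul_le_mul_of_nonneg_right (by exact_mod_cast n.choose_le_two_pow k) (by positivity))

theorem perronPolys_subset_image_intBox (n : ℕ) (R : ℝ) :
    perronPolys n R ⊆ monicOfCoeffs n ''
      intBox (fun k : Fin n ↦ -(2 ^ n * R ^ (n - k))) (fun k ↦ 2 ^ n * R ^ (n - k)) := by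
  intro p hp
  refine ⟨fun k ↦ p.coeff k, mem_intBox.mpr fun k ↦ ?_,
    monicOfCoeffs_eq_of_monic hp.1 hp.2.1⟩
  exact abs_le.mp (abs_coeff_le_of_mem_perronPolys hp k)

theorem perronPolys_finite (n : ℕ) (R : ℝ) : (perronPolys n R).Finite :=
  ((intBox _ _).finite_toSet.image _).subset (perronPolys_subset_image_intBox n R)

theorem ncard_perronPolys_le (n : ℕ) {R : ℝ} (hR : 1 ≤ R) :
    ((perronPolys n R).ncard : ℝ) ≤ 2 ^ (n * (n + 2)) * R ^ (n * (n + 1) / 2) := by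
  have hbox := perronPolys_subset_image_intBox n R
  have hbound : ∀ k : Fin n, 1 ≤ (2 : ℝ) ^ n * R ^ (n - k) := fun k ↦
    one_le_mul_of_one_le_of_one_le (one_le_pow₀ one_le_two) (one_le_pow₀ hR)
  calc ((perronPolys n R).ncard : ℝ)
      ≤ #(intBox (fun k : Fin n ↦ -(2 ^ n * R ^ (n - k))) (fun k ↦ 2 ^ n * R ^ (n - k))) := by
        rw [← Set.ncard_coe_finset]
        exact_mod_cast (Set.ncard_le_ncard hbox ((finite_toSet _).image _)).trans
          (Set.ncard_image_le (finite_toSet _))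
    _ ≤ ∏ k : Fin n, (2 ^ n * R ^ (n - k) - -(2 ^ n * R ^ (n - k)) + 1) :=
        card_intBox_le fun k ↦ neg_le_self (by positivity)
    _ ≤ ∏ k : Fin n, 2 ^ (n + 2) * R ^ (n - k) := by
        refine prod_le_prod (fun k _ ↦ by linarith [hbound k]) fun k _ ↦ ?_
        rw [pow_add, mul_assoc]
        linarith [hbound k]
    _ = 2 ^ (n * (n + 2)) * R ^ (n * (n + 1) / 2) := by
        rw [prod_mul_distrib, prod_const, card_univ, Fintype.card_fin, ← pow_mul,
          prod_pow_sub_fin, mul_comm (n + 2)]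

theorem sum_pow_succ_sub_mul_pow_le {e A : ℝ} (he : 0 ≤ e) (hA : 2 * e ≤ A) (N : ℕ) :
    ∑ k ∈ range N, e ^ (N + 1 - k) * A ^ k ≤ e * A ^ N := by
  have hA0 : 0 ≤ A := by linarith
  induction N with
  | zero => simpa using he
  | succ N ih =>
    have hshift : ∑ k ∈ range N, e ^ (N + 1 + 1 - k) * A ^ k =
        e * ∑ k ∈ range N, e ^ (N + 1 - k) * A ^ k := by
      rw [mul_sum]
      refine sum_congr rfl fun k hk ↦ ?_
      rw [Nat.sub_add_comm (by have := mem_range.mp hk; omega), pow_succ]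
      ring
    calc ∑ k ∈ range (N + 1), e ^ (N + 1 + 1 - k) * A ^ k
        = e * ∑ k ∈ range N, e ^ (N + 1 - k) * A ^ k + e ^ 2 * A ^ N := by
          rw [sum_range_succ, hshift, show N + 1 + 1 - N = 2 by omega]
      _ ≤ e * (e * A ^ N) + e ^ 2 * A ^ N := by gcongr
      _ = 2 * e * (e * A ^ N) := by ring
      _ ≤ A * (e * A ^ N) := mul_le_mul_of_nonneg_right hA (mul_nonneg he (pow_nonneg hA0 N))
      _ = e * A ^ (N + 1) := by ring

theorem norm_le_or_norm_sub_le_of_isRoot {p : ℂ[X]} {N : ℕ} {m : ℂ} {e : ℝ} (hp : p.Monic)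
    (hdeg : p.natDegree = N + 1) (hnext : p.coeff N = -m) (he : 0 ≤ e)
    (hsmall : ∀ k < N, ‖p.coeff k‖ ≤ e ^ (N + 1 - k)) {z : ℂ} (hz : p.IsRoot z) :
    ‖z‖ ≤ 2 * e ∨ ‖z - m‖ ≤ e := by
  refine or_iff_not_imp_left.mpr fun hfar ↦ ?_
  rw [not_le] at hfar
  have hsplit : z ^ N * (z - m) = -∑ k ∈ range N, p.coeff k * z ^ k := by
    have h := hz.eq_zero
    rw [eval_eq_sum_range, hdeg, sum_range_succ, sum_range_succ, hnext, ← hdeg,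
      hp.coeff_natDegree, hdeg] at h
    linear_combination h
  have key : ‖z‖ ^ N * ‖z - m‖ ≤ ‖z‖ ^ N * e := calc
    ‖z‖ ^ N * ‖z - m‖ = ‖∑ k ∈ range N, p.coeff k * z ^ k‖ := by
      rw [← norm_pow, ← norm_mul, hsplit, norm_neg]
    _ ≤ ∑ k ∈ range N, e ^ (N + 1 - k) * ‖z‖ ^ k := by
      refine (norm_sum_le _ _).trans (sum_le_sum fun k hk ↦ ?_)
      rw [norm_mul, norm_pow]
      gcongr
      exact hsmall k (mem_range.mp hk)
    _ ≤ e * ‖z‖ ^ N := sum_pow_succ_sub_mul_pow_le he hfar.le N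
    _ = ‖z‖ ^ N * e := mul_comm _ _
  exact le_of_mul_le_mul_left key (pow_pos (he.trans_lt (by linarith)) N)

theorem card_filter_norm_sub_le_eq_one {s : Multiset ℂ} {m e : ℝ} (hsum : s.sum = m)
    (he : 0 ≤ e) (hsmall : 2 * e * (Multiset.card s + 1) < m)
    (hloc : ∀ z ∈ s, ‖z‖ ≤ 2 * e ∨ ‖z - m‖ ≤ e) :
    Multiset.card (s.filter fun z : ℂ ↦ ‖z - m‖ ≤ e) = 1 := by
  set t := s.filter fun z : ℂ ↦ ‖z - m‖ ≤ e
  set u := s.filter fun z : ℂ ↦ ¬‖z - m‖ ≤ e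
  have htu : t + u = s := Multiset.filter_add_not _ _
  have hcard : (Multiset.card u : ℝ) ≤ Multiset.card s := by
    exact_mod_cast htu ▸ Multiset.card_le_card (Multiset.le_add_left u t)
  have hre : t.sum.re + u.sum.re = m := by
    rw [← Complex.add_re, ← Multiset.sum_add, htu, hsum, Complex.ofReal_re]
  have ht : Multiset.card t * (m - e) ≤ t.sum.re := by
    have h := Multiset.card_nsmul_le_sum (s := t.map Complex.re) (a := m - e) fun x hx ↦ by
      obtain ⟨z, hz, rfl⟩ := Multiset.mem_map.mp hx
      have hre := (Complex.abs_re_le_norm (z - m)).trans (Multiset.mem_filter.mp hz).2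
      rw [Complex.sub_re, Complex.ofReal_re, abs_le] at hre
      linarith [hre.1]
    rw [Multiset.card_map, nsmul_eq_mul, ← Complex.coe_reAddGroupHom, ← map_multiset_sum] at h
    exact h
  have hu : |u.sum.re| ≤ Multiset.card u * (2 * e) := by
    refine (Complex.abs_re_le_norm _).trans ((norm_multiset_sum_le _).trans ?_)
    have h := Multiset.sum_le_card_nsmul (u.map norm) (2 * e) fun x hx ↦ by
      obtain ⟨z, hz, rfl⟩ := Multiset.mem_map.mp hx
      exact (hloc z (Multiset.mem_filter.mp hz).1).resolve_right (Multiset.mem_filter.mp hz).2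
    rwa [Multiset.card_map, nsmul_eq_mul] at h
  have hne : 0 ≤ m - e := by nlinarith
  -- No root near `m` would give `m = re (∑ u) ≤ 2e |s|`; two, `m ≥ 2(m - e) - 2e |s|`.
  rcases lt_trichotomy (Multiset.card t) 1 with h0 | h1 | h2
  · have : t = 0 := Multiset.card_eq_zero.mp (by omega)
    rw [this, Multiset.sum_zero, Complex.zero_re, zero_add] at hre
    nlinarith [abs_le.mp hu]
  · exact h1
  · have : (2 : ℝ) ≤ Multiset.card t := by exact_mod_cast h2
    nlinarith [abs_le.mp hu]

theorem conj_mem_aroots {p : ℤ[X]} {z : ℂ} (hz : z ∈ p.aroots ℂ) :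
    starRingEnd ℂ z ∈ p.aroots ℂ := by
  rw [mem_aroots] at hz ⊢
  refine ⟨hz.1, ?_⟩
  rw [← RingHom.toIntAlgHom_apply, aeval_algHom_apply, hz.2, map_zero]

theorem Multiset.not_of_mem_erase_of_filter_eq_singleton {α : Type*} [DecidableEq α]
    {P : α → Prop} [DecidablePred P] {s : Multiset α} {a b : α} (h : s.filter P = {a})
    (hb : b ∈ s.erase a) : ¬P b := by
  intro hPb
  obtain ⟨ha, hPa⟩ := Multiset.mem_filter.mp (h ▸ Multiset.mem_singleton_self a)
  rw [← Multiset.cons_erase ha, Multiset.filter_cons_of_pos _ hPa, ← Multiset.cons_zero,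
    Multiset.cons_inj_right] at h
  exact Multiset.notMem_zero b (h ▸ Multiset.mem_filter.mpr ⟨hb, hPb⟩)

theorem exists_ofReal_eq_of_filter_aroots_eq_singleton {p : ℤ[X]} {m e : ℝ} {r : ℂ}
    (h : (p.aroots ℂ).filter (fun z : ℂ ↦ ‖z - m‖ ≤ e) = {r}) :
    ∃ l : ℝ, (l : ℂ) = r := by
  obtain ⟨hr, hnear⟩ := Multiset.mem_filter.mp (h ▸ Multiset.mem_singleton_self r)
  have hconj : starRingEnd ℂ r ∈ (p.aroots ℂ).filter fun z : ℂ ↦ ‖z - m‖ ≤ e := by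
    refine Multiset.mem_filter.mpr ⟨conj_mem_aroots hr, ?_⟩
    rwa [← Complex.conj_ofReal m, ← map_sub, Complex.norm_conj]
  rw [h] at hconj
  exact ⟨r.re, Complex.conj_eq_iff_re.mp (Multiset.mem_singleton.mp hconj)⟩

theorem sum_aroots_eq_neg_coeff {p : ℤ[X]} {N : ℕ} (hp : p.Monic) (hdeg : p.natDegree = N + 1) :
    (p.aroots ℂ).sum = -(p.coeff N : ℂ) := by
  have h := (IsAlgClosed.splits (p.map (algebraMap ℤ ℂ))).nextCoeff_eq_neg_sum_roots_of_monic
    (hp.map _)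
  rw [nextCoeff_of_natDegree_pos (by rw [hp.natDegree_map, hdeg]; omega), hp.natDegree_map,
    hdeg, Nat.add_sub_cancel, coeff_map, eq_intCast] at h
  rw [aroots_def, h, neg_neg]

theorem mem_perronPolys_of_coeff {N : ℕ} {p : ℤ[X]} {m : ℝ} (hp : p.Monic)
    (hdeg : p.natDegree = N + 1) (hm : 2 ≤ m) (hnext : (p.coeff N : ℝ) = -m)
    (hsmall : ∀ k < N, |(p.coeff k : ℝ)| ≤ (m / (8 * (N + 1))) ^ (N + 1 - k)) :
    p ∈ perronPolys (N + 1) (m + m / (8 * (N + 1))) := by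
  set e := m / (8 * (N + 1))
  have he : 0 ≤ e := by positivity
  have hNe : (N + 1) * e = m / 8 := by
    simp only [e]
    field_simp
  have he8 : e ≤ m / 8 :=
    hNe ▸ le_mul_of_one_le_left he (by linarith [N.cast_nonneg (α := ℝ)])
  have hnextC : (p.coeff N : ℂ) = -m := by exact_mod_cast congrArg ((↑) : ℝ → ℂ) hnext
  have hloc : ∀ z ∈ p.aroots ℂ, ‖z‖ ≤ 2 * e ∨ ‖z - m‖ ≤ e := by
    intro z hz
    refine norm_le_or_norm_sub_le_of_isRoot (N := N) (hp.map (algebraMap ℤ ℂ))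
      (by rw [hp.natDegree_map, hdeg]) ?_ he (fun k hk ↦ ?_) (mem_roots'.mp hz).2
    · rw [coeff_map, eq_intCast, hnextC]
    · rw [coeff_map, eq_intCast, Complex.norm_intCast]
      exact hsmall k hk
  have hcard : Multiset.card (p.aroots ℂ) = N + 1 :=
    hdeg ▸ IsAlgClosed.card_aroots_eq_natDegree ..
  have hsum : (p.aroots ℂ).sum = m := by
    rw [sum_aroots_eq_neg_coeff hp hdeg, hnextC, neg_neg]
  have hone := card_filter_norm_sub_le_eq_one hsum he (by rw [hcard]; push_cast; linarith) hloc
  obtain ⟨r, hr⟩ := Multiset.card_eq_one.mp hone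
  obtain ⟨l, rfl⟩ := exists_ofReal_eq_of_filter_aroots_eq_singleton hr
  obtain ⟨hl_root, hl_near⟩ :=
    Multiset.mem_filter.mp (hr ▸ Multiset.mem_singleton_self (l : ℂ))
  have hl : m - e ≤ l ∧ l ≤ m + e := by
    rw [← Complex.ofReal_sub, Complex.norm_real, Real.norm_eq_abs, abs_le] at hl_near
    constructor <;> linarith [hl_near.1, hl_near.2]
  refine ⟨hp, hdeg, l, by linarith, hl.2, ?_, fun μ hμ ↦ ?_⟩
  · have h : aeval (algebraMap ℝ ℂ l) p = 0 := (mem_aroots.mp hl_root).2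
    rwa [aeval_algebraMap_apply, map_eq_zero_iff _ (algebraMap ℝ ℂ).injective] at h
  · have hfar : ¬‖μ - m‖ ≤ e := Multiset.not_of_mem_erase_of_filter_eq_singleton
      (P := fun z : ℂ ↦ ‖z - m‖ ≤ e) hr hμ
    calc ‖μ‖ ≤ 2 * e := (hloc μ (Multiset.mem_of_mem_erase hμ)).resolve_right hfar
      _ < m - e := by linarith
      _ ≤ l := hl.1

theorem perronPolys_mono (n : ℕ) {R R' : ℝ} (h : R ≤ R') :
    perronPolys n R ⊆ perronPolys n R' :=
  fun _ ⟨hp, hdeg, l, hl1, hlR, hl⟩ ↦ ⟨hp, hdeg, l, hl1, hlR.trans h, hl⟩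

noncomputable def perronBox (N : ℕ) (R : ℝ) : Finset (Fin (N + 1) → ℤ) :=
  intBox (fun k ↦ if (k : ℕ) = N then -(R / 2) else -(R / (24 * (N + 1))) ^ (N + 1 - k))
    (fun k ↦ if (k : ℕ) = N then -(R / 3) else (R / (24 * (N + 1))) ^ (N + 1 - k))

theorem image_perronBox_subset {N : ℕ} {R : ℝ} (hR : 24 * (N + 1) ≤ R) :
    monicOfCoeffs (N + 1) '' perronBox N R ⊆ perronPolys (N + 1) R := by
  rintro _ ⟨c, hc, rfl⟩
  rw [Finset.mem_coe, perronBox, mem_intBox] at hc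
  set m := -(c (Fin.last N) : ℝ)
  have hm : R / 3 ≤ m ∧ m ≤ R / 2 := by
    have h := hc (Fin.last N)
    simp only [Fin.val_last, if_pos] at h
    constructor <;> linarith [h.1, h.2]
  refine perronPolys_mono _ ?_ (mem_perronPolys_of_coeff (m := m) (monicOfCoeffs_monic c)
    (monicOfCoeffs_natDegree c) (by linarith) ?_ fun k hk ↦ ?_)
  · have : m / (8 * (N + 1)) ≤ m / 8 :=
      div_le_div_of_nonneg_left (by linarith) (by norm_num) (by linarith)
    linarith
  · have hlast := monicOfCoeffs_coeff c (Fin.last N)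
    rw [Fin.val_last] at hlast
    rw [hlast]
    ring
  · have h := hc ⟨k, by omega⟩
    simp only [hk.ne, if_false] at h
    rw [show k = ((⟨k, by omega⟩ : Fin (N + 1)) : ℕ) from rfl, monicOfCoeffs_coeff]
    refine (abs_le.mpr ⟨by linarith [h.1], h.2⟩).trans
      (pow_le_pow_left₀ (div_nonneg (by linarith) (by positivity)) ?_ _)
    rw [div_le_div_iff₀ (by positivity) (by positivity)]
    nlinarith

theorem le_ncard_perronPolys {N : ℕ} {R : ℝ} (hR : 24 * (N + 1) ≤ R) :
    (R / (24 * (N + 1))) ^ ((N + 1) * (N + 1 + 1) / 2) ≤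
      ((perronPolys (N + 1) R).ncard : ℝ) := by
  set x := R / (24 * (N + 1))
  have hx : 1 ≤ x := by rw [le_div_iff₀ (by positivity)]; linarith
  have hx24 : x ≤ R / 24 := div_le_div_of_nonneg_left (by linarith) (by norm_num)
    (by have : (0 : ℝ) ≤ N := N.cast_nonneg; linarith)
  have hfactor : ∀ k : Fin (N + 1), 1 ≤ x ^ (N + 1 - k) := fun k ↦ one_le_pow₀ hx
  have hbox : ∏ k : Fin (N + 1), x ^ (N + 1 - k) ≤ #(perronBox N R) := by
    refine le_trans ?_ (prod_sub_sub_one_le_card_intBox fun k ↦ ?_)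
    · refine prod_le_prod (fun k _ ↦ by positivity) fun k _ ↦ ?_
      have := hfactor k
      split_ifs with hk
      · rw [hk, Nat.add_sub_cancel_left, pow_one]
        linarith
      · linarith
    · have := hfactor k
      split_ifs with hk <;> linarith
  calc x ^ ((N + 1) * (N + 1 + 1) / 2) = ∏ k : Fin (N + 1), x ^ (N + 1 - k) :=
        (prod_pow_sub_fin x (N + 1)).symm
    _ ≤ #(perronBox N R) := hbox
    _ = (monicOfCoeffs (N + 1) '' (perronBox N R : Set (Fin (N + 1) → ℤ))).ncard := by
        rw [Set.ncard_image_of_injective _ monicOfCoeffs_injective, Set.ncard_coe_finset]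
    _ ≤ (perronPolys (N + 1) R).ncard := by
        exact Nat.cast_le.mpr
          (Set.ncard_le_ncard (image_perronBox_subset hR) (perronPolys_finite _ _))

/-- `|P_n(R)| ∼ R^(n(n+1)/2)`: there is `C > 0` with
`(1/C) · R^(n(n+1)/2) ≤ |P_n(R)| ≤ C · R^(n(n+1)/2)` for all sufficiently large `R`. -/
theorem perronPolys_card_asymp (n : ℕ) (hn : 2 ≤ n) :
    ∃ C : ℝ, 0 < C ∧ ∀ᶠ R : ℝ in Filter.atTop,
      (1 / C) * R ^ (n * (n + 1) / 2) ≤ ((perronPolys n R).ncard : ℝ) ∧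
      ((perronPolys n R).ncard : ℝ) ≤ C * R ^ (n * (n + 1) / 2) := by
  obtain ⟨N, rfl⟩ : ∃ N, n = N + 1 := ⟨n - 1, by omega⟩
  set K : ℝ := 24 * (N + 1)
  have hK : 2 ≤ K := by have : (0 : ℝ) ≤ N := N.cast_nonneg; linarith
  have hexp : (N + 1) * (N + 1 + 1) / 2 ≤ (N + 1) * (N + 1 + 2) :=
    (Nat.div_le_self _ _).trans (Nat.mul_le_mul_left _ (by omega))
  refine ⟨K ^ ((N + 1) * (N + 1 + 2)), by positivity, ?_⟩
  filter_upwards [Filter.eventually_ge_atTop K] with R hR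
  have hRd : 0 ≤ R ^ ((N + 1) * (N + 1 + 1) / 2) := pow_nonneg (by linarith) _
  constructor
  · calc 1 / K ^ ((N + 1) * (N + 1 + 2)) * R ^ ((N + 1) * (N + 1 + 1) / 2)
        ≤ 1 / K ^ ((N + 1) * (N + 1 + 1) / 2) * R ^ ((N + 1) * (N + 1 + 1) / 2) := by
          refine mul_le_mul_of_nonneg_right (one_div_le_one_div_of_le (by positivity) ?_) hRd
          exact pow_le_pow_right₀ (by linarith) hexp
      _ = (R / K) ^ ((N + 1) * (N + 1 + 1) / 2) := by rw [div_pow, one_div_mul_eq_div]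
      _ ≤ _ := le_ncard_perronPolys hR
  · calc ((perronPolys (N + 1) R).ncard : ℝ)
        ≤ 2 ^ ((N + 1) * (N + 1 + 2)) * R ^ ((N + 1) * (N + 1 + 1) / 2) :=
          ncard_perronPolys_le _ (by linarith)
      _ ≤ _ := mul_le_mul_of_nonneg_right (pow_le_pow_left₀ zero_le_two hK _) hRd
end
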